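/- A point (x,y) ∈ ℂᴺ × ℂᴺ is a critical point of f := ‖μ_ℂ‖² (i.e. ∇f(x,y) = 0) if and only if (x,y) ∈ C_J for some critical subset J ⊆ {1,…,N}; equivalently, if and only if for every j ∈ {1,…,N} either x_j = y_j = 0 or ⟪u_j, μ_ℂ(x,y)⟫ = 0. -/

import Mathlib

noncomputable section

/-- `T*ℂᴺ = ℂᴺ × ℂᴺ` with its L² (Hermitian) norm. -/
abbrev HypPhase (N : ℕ) := WithLp 2 (EuclideanSpace ℂ (Fin N) × EuclideanSpace ℂ (Fin N))

/-- The inclusion `ℝᴺ ⊆ ℂᴺ`. -/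
def toC {N : ℕ} (v : EuclideanSpace ℝ (Fin N)) : EuclideanSpace ℂ (Fin N) :=
  (WithLp.equiv 2 (Fin N → ℂ)).symm fun i => ((WithLp.equiv 2 (Fin N → ℝ) v) i : ℂ)

/-- `J` is a critical subset for the family of weights `u`: `u i` lies in the span of
`{u j : j ∈ J}` iff `i ∈ J`. -/
def IsCriticalSubset {N : ℕ} (u : Fin N → EuclideanSpace ℝ (Fin N))
    (J : Set (Fin N)) : Prop :=
  ∀ i, u i ∈ Submodule.span ℝ (u '' J) ↔ i ∈ J

/-- The subset `C_J` of `T*ℂᴺ` associated to a critical subset `J`. -/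
def CJ {N : ℕ} (u : Fin N → EuclideanSpace ℝ (Fin N))
    (μC : HypPhase N → EuclideanSpace ℂ (Fin N)) (J : Set (Fin N)) :
    Set (HypPhase N) :=
  {p | (∀ i ∈ J, (inner ℂ (toC (u i)) (μC p) : ℂ) = 0) ∧
       (∀ j ∉ J, p.fst j = 0 ∧ p.snd j = 0)}

/-!
Differentiating `f = ‖μ_ℂ‖²` gives `df(a, b) = 2 Re ∑ⱼ (xⱼ bⱼ + yⱼ aⱼ) ⟪μ_ℂ, uⱼ⟫`, so
`∇f = 2 (ȳⱼ ⟪uⱼ, μ_ℂ⟫, x̄ⱼ ⟪uⱼ, μ_ℂ⟫)ⱼ`, which vanishes iff for every `j` either `xⱼ = yⱼ = 0` or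
`⟪uⱼ, μ_ℂ⟫ = 0`. If `S` is the set of `j` with `⟪uⱼ, μ_ℂ⟫ = 0`, the indices `i` with `uᵢ` in the
span of `u(S)` form a critical subset `J ⊇ S`, and `⟪uᵢ, μ_ℂ⟫ = 0` for `i ∈ J` because
`v ↦ ⟪v, μ_ℂ⟫` is real-linear on `ℝᴺ`.
-/

open scoped ComplexConjugate InnerProductSpace

section ComplexMomentMap

variable {ι E : Type*} [Fintype ι] [NormedAddCommGroup E] [InnerProductSpace ℂ E]

def complexMomentMap (w : ι → E) (β : E)
    (p : WithLp 2 (EuclideanSpace ℂ ι × EuclideanSpace ℂ ι)) : E :=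
  ∑ j, (p.fst j * p.snd j) • w j - β

def coordFst (j : ι) : WithLp 2 (EuclideanSpace ℂ ι × EuclideanSpace ℂ ι) →L[ℝ] ℂ :=
  ((EuclideanSpace.proj j).restrictScalars ℝ).comp (WithLp.fstL 2 ℝ _ _)

def coordSnd (j : ι) : WithLp 2 (EuclideanSpace ℂ ι × EuclideanSpace ℂ ι) →L[ℝ] ℂ :=
  ((EuclideanSpace.proj j).restrictScalars ℝ).comp (WithLp.sndL 2 ℝ _ _)

theorem hasFDerivAt_complexMomentMap (w : ι → E) (β : E)
    (p : WithLp 2 (EuclideanSpace ℂ ι × EuclideanSpace ℂ ι)) :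
    HasFDerivAt (𝕜 := ℝ) (complexMomentMap w β)
      (∑ j, ((p.fst j • coordSnd j + p.snd j • coordFst j).smulRight (w j) :
        WithLp 2 (EuclideanSpace ℂ ι × EuclideanSpace ℂ ι) →L[ℝ] E)) p := by
  refine (HasFDerivAt.fun_sum (u := Finset.univ) fun j _ => ?_).sub_const β
  exact ((coordFst j).hasFDerivAt.mul (coordSnd j).hasFDerivAt).smul_const (w j)

def gradientNormSqComplexMoment (w : ι → E) (β : E)
    (p : WithLp 2 (EuclideanSpace ℂ ι × EuclideanSpace ℂ ι)) :
    WithLp 2 (EuclideanSpace ℂ ι × EuclideanSpace ℂ ι) :=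
  WithLp.toLp 2
    (WithLp.toLp 2 fun j => 2 * conj (p.snd j) * ⟪w j, complexMomentMap w β p⟫_ℂ,
     WithLp.toLp 2 fun j => 2 * conj (p.fst j) * ⟪w j, complexMomentMap w β p⟫_ℂ)

theorem hasGradientAt_norm_sq_complexMomentMap (w : ι → E) (β : E)
    (p : WithLp 2 (EuclideanSpace ℂ ι × EuclideanSpace ℂ ι)) :
    HasGradientAt (fun q => ‖complexMomentMap w β q‖ ^ 2)
      (gradientNormSqComplexMoment w β p) p := by
  -- `HasFDerivAt.norm_sq` needs a real inner product on `E`; `Re ⟪·,·⟫_ℂ` induces the same norm.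
  let _ := InnerProductSpace.complexToReal (G := E)
  rw [hasGradientAt_iff_hasFDerivAt]
  refine (hasFDerivAt_complexMomentMap w β p).norm_sq.congr_fderiv ?_
  ext v
  simp only [gradientNormSqComplexMoment, coordSnd, coordFst, smul_apply,
    ContinuousLinearMap.comp_apply, sum_apply,
    ContinuousLinearMap.smulRight_apply, add_apply, WithLp.sndL_apply,
    ContinuousLinearMap.coe_restrictScalars', PiLp.proj_apply, smul_eq_mul, WithLp.fstL_apply,
    coe_innerSL_apply, inner_sum, inner_smul_right, nsmul_eq_mul, Nat.cast_ofNat,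
    InnerProductSpace.toDual_apply_apply, WithLp.prod_inner_apply, PiLp.inner_apply,
    real_inner_eq_re_inner]
  rw [Finset.mul_sum, ← Finset.sum_add_distrib]
  refine Finset.sum_congr rfl fun j _ => ?_
  simp only [inner_conj_symm, RCLike.mul_re, RCLike.re_to_complex, Complex.add_re, Complex.mul_re,
    RCLike.im_to_complex, Complex.add_im, Complex.mul_im, WithLp.ofLp_fst, RCLike.inner_apply,
    map_mul, RingHomCompTriple.comp_apply, RingHom.id_apply, RCLike.conj_re, RCLike.ofNat_re,
    RCLike.conj_im, RCLike.ofNat_im, neg_zero, zero_mul, sub_zero, RCLike.mul_im, add_zero,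
    WithLp.ofLp_snd]
  ring

theorem gradient_norm_sq_complexMomentMap_eq_zero_iff (w : ι → E) (β : E)
    (p : WithLp 2 (EuclideanSpace ℂ ι × EuclideanSpace ℂ ι)) :
    gradient (fun q => ‖complexMomentMap w β q‖ ^ 2) p = 0 ↔
      ∀ j, (p.fst j = 0 ∧ p.snd j = 0) ∨ ⟪w j, complexMomentMap w β p⟫_ℂ = 0 := by
  rw [(hasGradientAt_norm_sq_complexMomentMap w β p).gradient]
  simp only [gradientNormSqComplexMoment, WithLp.ext_iff, WithLp.ofLp_zero, Prod.mk_eq_zero,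
    funext_iff, Pi.zero_apply, mul_eq_zero, OfNat.ofNat_ne_zero, map_eq_zero, false_or]
  rw [← forall_and]
  exact forall_congr' fun j => by tauto

end ComplexMomentMap

section CriticalSubset

variable {N : ℕ}

def toCₗ : EuclideanSpace ℝ (Fin N) →ₗ[ℝ] EuclideanSpace ℂ (Fin N) where
  toFun := toC
  map_add' a b := by ext i; simp [toC]
  map_smul' r a := by ext i; simp [toC]

theorem inner_toC_eq_zero_of_mem_span {u : Fin N → EuclideanSpace ℝ (Fin N)} {S : Set (Fin N)}
    {z : EuclideanSpace ℂ (Fin N)} (h : ∀ j ∈ S, ⟪toC (u j), z⟫_ℂ = 0)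
    {x : EuclideanSpace ℝ (Fin N)} (hx : x ∈ Submodule.span ℝ (u '' S)) :
    ⟪toC x, z⟫_ℂ = 0 := by
  have hle : Submodule.span ℝ (u '' S) ≤
      LinearMap.ker (((innerₛₗ ℂ z).restrictScalars ℝ).comp toCₗ) :=
    Submodule.span_le.2 <| by
      rintro _ ⟨j, hj, rfl⟩
      exact inner_eq_zero_symm.1 (h j hj)
  exact inner_eq_zero_symm.2 (hle hx)

theorem isCriticalSubset_setOf_mem_span (u : Fin N → EuclideanSpace ℝ (Fin N))
    (S : Set (Fin N)) : IsCriticalSubset u {i | u i ∈ Submodule.span ℝ (u '' S)} := by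
  have hspan : Submodule.span ℝ (u '' {i | u i ∈ Submodule.span ℝ (u '' S)}) =
      Submodule.span ℝ (u '' S) :=
    le_antisymm (Submodule.span_le.2 <| by rintro _ ⟨i, hi, rfl⟩; exact hi)
      (Submodule.span_mono (Set.image_mono fun j hj => Submodule.subset_span ⟨j, hj, rfl⟩))
  intro i
  rw [hspan]
  rfl

theorem exists_isCriticalSubset_mem_CJ_iff (u : Fin N → EuclideanSpace ℝ (Fin N))
    (μC : HypPhase N → EuclideanSpace ℂ (Fin N)) (p : HypPhase N) :
    (∃ J, IsCriticalSubset u J ∧ p ∈ CJ u μC J) ↔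
      ∀ j, (p.fst j = 0 ∧ p.snd j = 0) ∨ ⟪toC (u j), μC p⟫_ℂ = 0 := by
  constructor
  · rintro ⟨J, -, hμ, hzero⟩ j
    by_cases hj : j ∈ J
    · exact Or.inr (hμ j hj)
    · exact Or.inl (hzero j hj)
  · intro h
    let S := {j | ⟪toC (u j), μC p⟫_ℂ = 0}
    refine ⟨_, isCriticalSubset_setOf_mem_span u S,
      fun i hi => inner_toC_eq_zero_of_mem_span (fun j hj => hj) hi, fun j hj => ?_⟩
    exact (h j).resolve_right fun hS => hj (Submodule.subset_span ⟨j, hS, rfl⟩)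

end CriticalSubset

theorem stmt15_general (N : ℕ)
    (u : Fin N → EuclideanSpace ℝ (Fin N))
    (β : EuclideanSpace ℂ (Fin N))
    (μC : HypPhase N → EuclideanSpace ℂ (Fin N))
    (hμC : ∀ p : HypPhase N, μC p = (∑ j, (p.fst j * p.snd j) • toC (u j)) - β)
    (f : HypPhase N → ℝ) (hf : ∀ p, f p = ‖μC p‖ ^ 2) :
    ∀ p : HypPhase N,
      (gradient f p = 0 ↔ ∃ J : Set (Fin N), IsCriticalSubset u J ∧ p ∈ CJ u μC J) ∧
      (gradient f p = 0 ↔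
        ∀ j, (p.fst j = 0 ∧ p.snd j = 0) ∨ (inner ℂ (toC (u j)) (μC p) : ℂ) = 0) := by
  obtain rfl : μC = complexMomentMap (fun j => toC (u j)) β := funext hμC
  obtain rfl : f = fun q => ‖complexMomentMap (fun j => toC (u j)) β q‖ ^ 2 := funext hf
  intro p
  have hcrit := gradient_norm_sq_complexMomentMap_eq_zero_iff (fun j => toC (u j)) β p
  exact ⟨hcrit.trans (exists_isCriticalSubset_mem_CJ_iff u _ p).symm, hcrit⟩

/-- A point of `T*ℂᴺ` is a critical point of `f = ‖μ_ℂ‖²` iff it lies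
in `C_J` for some critical subset `J`; equivalently, iff for each `j` either
`x_j = y_j = 0` or `⟪u_j, μ_ℂ(x,y)⟫ = 0`. -/
theorem stmt15 (N : ℕ) (𝔱 : Submodule ℝ (EuclideanSpace ℝ (Fin N)))
    (u : Fin N → EuclideanSpace ℝ (Fin N))
    (hu : ∀ j, u j = (𝔱.orthogonalProjectionOnto (EuclideanSpace.single j 1) :
      EuclideanSpace ℝ (Fin N)))
    (β : EuclideanSpace ℂ (Fin N))
    (hβ : β ∈ Submodule.span ℂ (toC '' (𝔱 : Set (EuclideanSpace ℝ (Fin N)))))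
    (μC : HypPhase N → EuclideanSpace ℂ (Fin N))
    (hμC : ∀ p : HypPhase N, μC p = (∑ j, (p.fst j * p.snd j) • toC (u j)) - β)
    (f : HypPhase N → ℝ) (hf : ∀ p, f p = ‖μC p‖ ^ 2) :
    ∀ p : HypPhase N,
      (gradient f p = 0 ↔ ∃ J : Set (Fin N), IsCriticalSubset u J ∧ p ∈ CJ u μC J) ∧
      (gradient f p = 0 ↔
        ∀ j, (p.fst j = 0 ∧ p.snd j = 0) ∨ (inner ℂ (toC (u j)) (μC p) : ℂ) = 0) :=
  stmt15_general N u β μC hμC f hf
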